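/- Let φ be 𝒯-good and 𝒜 = {I_j} a pairwise disjoint family of elements of S_φ. Then for every β > 0: ∫_{⋃I_j} φ^p dμ ≥ (Σ_j μ(I_j) y_{I_j}^p)/(β+1)^{p−1} + ((p−1)β/(β+1)^p)·∫_{⋃I_j}(M_𝒯φ)^p dμ, where y_{I_j} = Av_{I_j}(φ). -/

import Mathlib

/-!
For `I ∈ S_φ` no ancestor of `I` has a larger average than `I`, so every element of `𝒯` that
meets `I` and on which the average of `φ` exceeds a level `s ≥ Av_I(φ)` lies inside `I`.
Covering by the maximal such elements gives the reverse weak-type bound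
`s · μ(I ∩ {M_𝒯φ > s}) ≤ ∫_{I ∩ {M_𝒯φ > s}} φ`. Integrating it against the layer-cake
formula above the level `Av_I(φ)` yields
`(p-1) ∫_I (M_𝒯φ)^p + μ(I) Av_I(φ)^p ≤ p ∫_I φ (M_𝒯φ)^(p-1)`, and Young's inequality
`p a b^(p-1) ≤ t^(1-p) a^p + (p-1) t b^p` with `t = 1/(β+1)` turns this into the bound on a
single `I`; truncating `M_𝒯φ` at finite heights justifies the cancellation. Summing over the
disjoint family gives the theorem.
-/

open MeasureTheory Set Filter
open scoped ENNReal

/-- A tree `𝒯` on a probability space `(X, μ)` in the sense of Melas: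
`X ∈ 𝒯`; every `I ∈ 𝒯` is measurable with `μ(I) > 0`; each `I ∈ 𝒯` has a finite or
countable family `C(I) ⊆ 𝒯` of at least two pairwise disjoint elements with union `I`;
`𝒯` is the union of its generations `𝒯_(m)`; and `sup_{I ∈ 𝒯_(m)} μ(I) → 0`. -/
structure DyadicTree {X : Type*} [MeasurableSpace X] (μ : Measure X) where
  mem : Set (Set X)
  univ_mem : Set.univ ∈ mem
  meas : ∀ I ∈ mem, MeasurableSet I
  measure_pos : ∀ I ∈ mem, 0 < μ I
  C : Set X → Set (Set X)
  C_subset_mem : ∀ I ∈ mem, C I ⊆ mem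
  C_countable : ∀ I ∈ mem, (C I).Countable
  C_nontrivial : ∀ I ∈ mem, ∃ J ∈ C I, ∃ K ∈ C I, J ≠ K
  C_disjoint : ∀ I ∈ mem, (C I).Pairwise Disjoint
  C_union : ∀ I ∈ mem, ⋃₀ C I = I
  gen : ℕ → Set (Set X)
  gen_zero : gen 0 = {Set.univ}
  gen_succ : ∀ m, gen (m + 1) = ⋃ I ∈ gen m, C I
  mem_eq : mem = ⋃ m, gen m
  sup_measure_tendsto : Tendsto (fun m => ⨆ I ∈ gen m, μ I) atTop (nhds 0)

variable {X : Type*} [MeasurableSpace X]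

/-- The average `Av_I(φ) = (1/μ(I)) ∫_I φ dμ`. -/
noncomputable def Av (μ : Measure X) (I : Set X) (φ : X → ℝ≥0∞) : ℝ≥0∞ :=
  (∫⁻ y in I, φ y ∂μ) / μ I

/-- The dyadic-like maximal operator
`M_𝒯 φ(x) = sup { (1/μ(I)) ∫_I φ dμ : x ∈ I ∈ 𝒯 }`. -/
noncomputable def maxOp {μ : Measure X} (T : DyadicTree μ) (φ : X → ℝ≥0∞) (x : X) : ℝ≥0∞ :=
  ⨆ I ∈ T.mem, ⨆ _ : x ∈ I, Av μ I φ

variable {μ : Measure X}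

/-- The exceptional set `𝒜_φ = {x : M_𝒯φ(x) > Av_I(φ) for all I ∈ 𝒯 with x ∈ I}`. -/
def badSet (T : DyadicTree μ) (φ : X → ℝ≥0∞) : Set X :=
  {x | ∀ I ∈ T.mem, x ∈ I → Av μ I φ < maxOp T φ x}

/-- `φ` is `𝒯`-good if the set `𝒜_φ` has `μ`-measure zero. -/
def TGood (T : DyadicTree μ) (φ : X → ℝ≥0∞) : Prop :=
  μ (badSet T φ) = 0

/-- The set `A(φ, I) = {x ∈ X ∖ 𝒜_φ : I_φ(x) = I}`, where `I_φ(x)` is the largest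
`I ∈ 𝒯` with `x ∈ I` and `M_𝒯φ(x) = Av_I(φ)`. -/
def ASet (T : DyadicTree μ) (φ : X → ℝ≥0∞) (I : Set X) : Set X :=
  {x | x ∉ badSet T φ ∧ x ∈ I ∧ maxOp T φ x = Av μ I φ ∧
    ∀ J ∈ T.mem, x ∈ J → maxOp T φ x = Av μ J φ → J ⊆ I}

/-- The subtree `S_φ = {I ∈ 𝒯 : μ(A(φ,I)) > 0} ∪ {X}`. -/
def Sphi (T : DyadicTree μ) (φ : X → ℝ≥0∞) : Set (Set X) :=
  {I ∈ T.mem | 0 < μ (ASet T φ I)} ∪ {Set.univ}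

namespace DyadicTree

variable (T : DyadicTree μ)

lemma gen_subset_mem (m : ℕ) : T.gen m ⊆ T.mem := by
  rw [T.mem_eq]; exact subset_iUnion T.gen m

lemma countable_mem : T.mem.Countable := by
  have hgen : ∀ m, (T.gen m).Countable := by
    intro m
    induction m with
    | zero => rw [T.gen_zero]; exact countable_singleton _
    | succ m ih =>
      rw [T.gen_succ]
      exact ih.biUnion fun I hI => T.C_countable I (T.gen_subset_mem m hI)
  rw [T.mem_eq]; exact countable_iUnion hgen

lemma subset_of_mem_C {I J : Set X} (hI : I ∈ T.mem) (hJ : J ∈ T.C I) : J ⊆ I := by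
  rw [← T.C_union I hI]; exact subset_sUnion_of_mem hJ

lemma exists_gen_superset {m k : ℕ} {J : Set X} (hJ : J ∈ T.gen (m + k)) :
    ∃ I ∈ T.gen m, J ⊆ I := by
  induction k generalizing J with
  | zero => exact ⟨J, hJ, subset_rfl⟩
  | succ k ih =>
    rw [← add_assoc, T.gen_succ, mem_iUnion₂] at hJ
    obtain ⟨K, hK, hJK⟩ := hJ
    obtain ⟨I, hI, hKI⟩ := ih hK
    exact ⟨I, hI, (T.subset_of_mem_C (T.gen_subset_mem _ hK) hJK).trans hKI⟩

lemma eq_or_disjoint_of_mem_gen {m : ℕ} {I J : Set X} (hI : I ∈ T.gen m)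
    (hJ : J ∈ T.gen m) : I = J ∨ Disjoint I J := by
  induction m generalizing I J with
  | zero =>
    rw [T.gen_zero, mem_singleton_iff] at hI hJ
    exact Or.inl (hI.trans hJ.symm)
  | succ m ih =>
    rw [T.gen_succ, mem_iUnion₂] at hI hJ
    obtain ⟨I₀, hI₀, hIC⟩ := hI
    obtain ⟨J₀, hJ₀, hJC⟩ := hJ
    rcases ih hI₀ hJ₀ with rfl | hdisj
    · exact (eq_or_ne I J).imp_right
        (T.C_disjoint I₀ (T.gen_subset_mem m hI₀) hIC hJC)
    · exact Or.inr (hdisj.mono (T.subset_of_mem_C (T.gen_subset_mem m hI₀) hIC)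
        (T.subset_of_mem_C (T.gen_subset_mem m hJ₀) hJC))

lemma subset_or_disjoint_of_mem_gen_of_le {m n : ℕ} (hmn : m ≤ n) {I J : Set X}
    (hI : I ∈ T.gen m) (hJ : J ∈ T.gen n) : J ⊆ I ∨ Disjoint I J := by
  obtain ⟨k, rfl⟩ := Nat.exists_eq_add_of_le hmn
  obtain ⟨K, hK, hJK⟩ := T.exists_gen_superset hJ
  rcases T.eq_or_disjoint_of_mem_gen hK hI with rfl | hdisj
  · exact Or.inl hJK
  · exact Or.inr (hdisj.symm.mono_right hJK)

lemma subset_or_subset_or_disjoint {I J : Set X} (hI : I ∈ T.mem) (hJ : J ∈ T.mem) :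
    I ⊆ J ∨ J ⊆ I ∨ Disjoint I J := by
  rw [T.mem_eq, mem_iUnion] at hI hJ
  obtain ⟨m, hI⟩ := hI
  obtain ⟨n, hJ⟩ := hJ
  rcases le_total m n with h | h
  · exact Or.inr (T.subset_or_disjoint_of_mem_gen_of_le h hI hJ)
  · exact (T.subset_or_disjoint_of_mem_gen_of_le h hJ hI).imp_right
      fun hdisj => Or.inr hdisj.symm

end DyadicTree

section MaxOp

variable (T : DyadicTree μ) (φ : X → ℝ≥0∞)

lemma av_le_maxOp {I : Set X} (hI : I ∈ T.mem) {x : X} (hx : x ∈ I) :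
    Av μ I φ ≤ maxOp T φ x :=
  le_iSup₂_of_le I hI (le_iSup_of_le hx le_rfl)

lemma lt_maxOp_iff {x : X} {l : ℝ≥0∞} :
    l < maxOp T φ x ↔ ∃ J ∈ T.mem, x ∈ J ∧ l < Av μ J φ := by
  simp only [maxOp, lt_iSup_iff, exists_prop]

lemma measurable_maxOp : Measurable (maxOp T φ) := by
  have : Countable T.mem := T.countable_mem.to_subtype
  have hrw : maxOp T φ = fun x => ⨆ I : T.mem, (I : Set X).indicator (fun _ => Av μ I φ) x := by
    funext x
    rw [maxOp, iSup_subtype']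
    congr 1
    funext I
    by_cases hx : x ∈ (I : Set X)
    · rw [indicator_of_mem hx, iSup_pos hx]
    · rw [indicator_of_notMem hx, iSup_neg hx, bot_eq_zero]
  rw [hrw]
  exact Measurable.iSup fun I => measurable_const.indicator (T.meas I I.2)

end MaxOp

section Laminar

variable {φ : X → ℝ≥0∞} {l : ℝ≥0∞}

lemma setLIntegral_sUnion {s : Set (Set X)} (hs : s.Countable)
    (hmeas : ∀ J ∈ s, MeasurableSet J) (hdisj : s.Pairwise Disjoint) (f : X → ℝ≥0∞) :
    ∫⁻ x in ⋃₀ s, f x ∂μ = ∑' J : s, ∫⁻ x in J, f x ∂μ := by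
  rw [sUnion_eq_biUnion]; exact lintegral_biUnion hs hmeas hdisj f

lemma mul_measure_sUnion_le_of_finite {s : Set (Set X)} (hs : s.Finite)
    (hmeas : ∀ J ∈ s, MeasurableSet J)
    (hlam : ∀ I ∈ s, ∀ J ∈ s, I ⊆ J ∨ J ⊆ I ∨ Disjoint I J)
    (h : ∀ J ∈ s, l * μ J ≤ ∫⁻ x in J, φ x ∂μ) :
    l * μ (⋃₀ s) ≤ ∫⁻ x in ⋃₀ s, φ x ∂μ := by
  set m := {J | Maximal (· ∈ s) J}
  have hms : m ⊆ s := fun J hJ => hJ.prop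
  have hcover : ⋃₀ m = ⋃₀ s := by
    refine subset_antisymm (sUnion_mono hms) (sUnion_subset fun J hJ => ?_)
    obtain ⟨K, hJK, hK⟩ := hs.exists_le_maximal hJ
    exact hJK.trans (subset_sUnion_of_mem hK)
  have hdisj : m.Pairwise Disjoint := by
    intro I hI J hJ hne
    rcases hlam I hI.prop J hJ.prop with hIJ | hJI | hdisj
    · exact absurd (hI.eq_of_le hJ.prop hIJ) hne
    · exact absurd (hJ.eq_of_le hI.prop hJI).symm hne
    · exact hdisj
  have hmc : m.Countable := (hs.subset hms).countable
  have hmmeas : ∀ J ∈ m, MeasurableSet J := fun J hJ => hmeas J (hms hJ)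
  rw [← hcover, measure_sUnion hmc hdisj hmmeas, setLIntegral_sUnion hmc hmmeas hdisj,
    ← ENNReal.tsum_mul_left]
  exact ENNReal.tsum_le_tsum fun J => h J (hms J.2)

lemma mul_measure_sUnion_le_of_countable {s : Set (Set X)} (hs : s.Countable)
    (hmeas : ∀ J ∈ s, MeasurableSet J)
    (hlam : ∀ I ∈ s, ∀ J ∈ s, I ⊆ J ∨ J ⊆ I ∨ Disjoint I J)
    (h : ∀ J ∈ s, l * μ J ≤ ∫⁻ x in J, φ x ∂μ) :
    l * μ (⋃₀ s) ≤ ∫⁻ x in ⋃₀ s, φ x ∂μ := by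
  have : Countable s := hs.to_subtype
  set U : Finset s → Set X := fun u => ⋃₀ (Subtype.val '' (u : Set s))
  have hU : ⋃₀ s = ⋃ u, U u := by
    refine subset_antisymm (sUnion_subset fun J hJ => ?_)
      (iUnion_subset fun u => sUnion_mono (by simp))
    exact subset_iUnion_of_subset {⟨J, hJ⟩} (subset_sUnion_of_mem (by simp))
  have hdir : Directed (· ⊆ ·) U :=
    Monotone.directed_le fun u v huv => sUnion_mono (image_mono (by simpa using huv))
  rw [hU, hdir.measure_iUnion, ENNReal.mul_iSup]
  refine iSup_le fun u => ?_
  have hus : Subtype.val '' (u : Set s) ⊆ s := by simp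
  refine (mul_measure_sUnion_le_of_finite (u.finite_toSet.image _)
    (fun J hJ => hmeas J (hus hJ)) (fun I hI J hJ => hlam I (hus hI) J (hus hJ))
    (fun J hJ => h J (hus hJ))).trans (lintegral_mono_set (subset_iUnion U u))

end Laminar

def ReverseWeakTypeAbove (μ : Measure X) (φ G : X → ℝ≥0∞) (I : Set X) (y : ℝ≥0∞) : Prop :=
  ∀ s, y ≤ s → s * μ (I ∩ {x | s < G x}) ≤ ∫⁻ x in I ∩ {x | s < G x}, φ x ∂μ

lemma ReverseWeakTypeAbove.min_const {φ G : X → ℝ≥0∞} {I : Set X} {y : ℝ≥0∞}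
    (h : ReverseWeakTypeAbove μ φ G I y) (N : ℝ≥0∞) :
    ReverseWeakTypeAbove μ φ (fun x => min (G x) N) I y := by
  intro s hs
  by_cases hsN : s < N
  · simpa only [lt_min_iff, hsN, and_true] using h s hs
  · simp [hsN]

section ReverseWeakType

variable (T : DyadicTree μ) {φ : X → ℝ≥0∞}

lemma mem_of_mem_Sphi {I : Set X} (hI : I ∈ Sphi T φ) : I ∈ T.mem := by
  rcases hI with hI | rfl
  · exact hI.1
  · exact T.univ_mem

lemma av_le_of_mem_Sphi {I J : Set X} (hI : I ∈ Sphi T φ) (hJ : J ∈ T.mem) (hIJ : I ⊆ J) :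
    Av μ J φ ≤ Av μ I φ := by
  rcases hI with ⟨-, hpos⟩ | rfl
  · obtain ⟨x, -, hxI, hmax, -⟩ := nonempty_of_measure_ne_zero hpos.ne'
    exact hmax ▸ av_le_maxOp T φ hJ (hIJ hxI)
  · rw [univ_subset_iff.mp hIJ]

lemma reverseWeakTypeAbove_maxOp {I : Set X} (hI : I ∈ T.mem)
    (hanc : ∀ J ∈ T.mem, I ⊆ J → Av μ J φ ≤ Av μ I φ) :
    ReverseWeakTypeAbove μ φ (maxOp T φ) I (Av μ I φ) := by
  intro l hl
  set F := {J | J ∈ T.mem ∧ J ⊆ I ∧ l < Av μ J φ}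
  have hF : I ∩ {x | l < maxOp T φ x} = ⋃₀ F := by
    ext x
    simp only [mem_inter_iff, mem_ofPred_eq, lt_maxOp_iff, mem_sUnion]
    constructor
    · rintro ⟨hxI, J, hJ, hxJ, hlJ⟩
      refine ⟨J, ⟨hJ, ?_, hlJ⟩, hxJ⟩
      rcases T.subset_or_subset_or_disjoint hI hJ with hIJ | hJI | hdisj
      · exact absurd ((hanc J hJ hIJ).trans hl) hlJ.not_ge
      · exact hJI
      · exact absurd hxJ (hdisj.notMem_of_mem_left hxI)
    · rintro ⟨J, ⟨hJ, hJI, hlJ⟩, hxJ⟩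
      exact ⟨hJI hxJ, J, hJ, hxJ, hlJ⟩
  rw [hF]
  exact mul_measure_sUnion_le_of_countable (T.countable_mem.mono fun J hJ => hJ.1)
    (fun J hJ => T.meas J hJ.1) (fun I hI J hJ => T.subset_or_subset_or_disjoint hI.1 hJ.1)
    fun J hJ => ENNReal.mul_le_of_le_div hJ.2.2.le

end ReverseWeakType

section LayerCake

variable {Z : Type*} [MeasurableSpace Z] (ν : Measure Z)

lemma ofReal_mul_lintegral_Ioc_rpow_sub_one {Y r : ℝ} (hY : 0 ≤ Y) (hr : 0 < r) :
    ENNReal.ofReal r * ∫⁻ t in Ioc 0 Y, ENNReal.ofReal (t ^ (r - 1)) = ENNReal.ofReal Y ^ r := by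
  have hint : IntegrableOn (fun t => t ^ (r - 1)) (Ioc 0 Y) :=
    (intervalIntegrable_iff_integrableOn_Ioc_of_le hY).mp
      (intervalIntegral.intervalIntegrable_rpow' (by linarith))
  have hnn : 0 ≤ᵐ[volume.restrict (Ioc 0 Y)] fun t => t ^ (r - 1) := by
    filter_upwards [ae_restrict_mem measurableSet_Ioc] with t ht
    exact Real.rpow_nonneg ht.1.le _
  rw [← ofReal_integral_eq_lintegral_ofReal hint hnn, ← intervalIntegral.integral_of_le hY,
    integral_rpow (Or.inl (by linarith)), sub_add_cancel, Real.zero_rpow hr.ne', sub_zero,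
    ← ENNReal.ofReal_mul hr.le, mul_div_cancel₀ _ hr.ne', ENNReal.ofReal_rpow_of_nonneg hY hr.le]

lemma lintegral_rpow_eq_lintegral_meas_lt_mul_of_ne_top {G : Z → ℝ≥0∞} (hG : Measurable G)
    (hGt : ∀ x, G x ≠ ∞) {r : ℝ} (hr : 0 < r) :
    ∫⁻ x, G x ^ r ∂ν =
      ENNReal.ofReal r *
        ∫⁻ t in Ioi 0, ν {x | ENNReal.ofReal t < G x} * ENNReal.ofReal (t ^ (r - 1)) := by
  have hofReal : ∀ x, ENNReal.ofReal ((G x).toReal ^ r) = G x ^ r := fun x => by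
    rw [← ENNReal.ofReal_rpow_of_nonneg ENNReal.toReal_nonneg hr.le, ENNReal.ofReal_toReal (hGt x)]
  have hlevel : ∀ t ∈ Ioi (0 : ℝ), {x | t < (G x).toReal} = {x | ENNReal.ofReal t < G x} :=
    fun t ht => by
      ext x
      exact (ENNReal.ofReal_lt_iff_lt_toReal (le_of_lt ht) (hGt x)).symm
  have := lintegral_rpow_eq_lintegral_meas_lt_mul ν
    (Eventually.of_forall fun x => ENNReal.toReal_nonneg) hG.ennreal_toReal.aemeasurable hr
  simp_rw [hofReal] at this
  rw [this, setLIntegral_congr_fun measurableSet_Ioi fun t ht => by rw [hlevel t ht]]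

lemma setLIntegral_rpow_eq_of_le {I : Set Z} (hI : MeasurableSet I) {G : Z → ℝ≥0∞}
    (hG : Measurable G) (hGt : ∀ x, G x ≠ ∞) {Y : ℝ} (hY : 0 ≤ Y)
    (hYG : ∀ x ∈ I, ENNReal.ofReal Y ≤ G x) {r : ℝ} (hr : 0 < r) :
    ∫⁻ x in I, G x ^ r ∂ν = ν I * ENNReal.ofReal Y ^ r + ENNReal.ofReal r *
      ∫⁻ t in Ioi Y, ν (I ∩ {x | ENNReal.ofReal t < G x}) * ENNReal.ofReal (t ^ (r - 1)) := by
  have hlow : ∀ t ∈ Ioo 0 Y,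
      ν.restrict I {x | ENNReal.ofReal t < G x} * ENNReal.ofReal (t ^ (r - 1)) =
        ν I * ENNReal.ofReal (t ^ (r - 1)) := fun t ht => by
    have hIG : I ⊆ {x | ENNReal.ofReal t < G x} := fun x hx =>
      ((ENNReal.ofReal_lt_ofReal_iff (ht.1.trans ht.2)).mpr ht.2).trans_le (hYG x hx)
    rw [Measure.restrict_apply' hI, inter_eq_right.mpr hIG]
  rw [lintegral_rpow_eq_lintegral_meas_lt_mul_of_ne_top _ hG hGt hr, ← Ioc_union_Ioi_eq_Ioi hY,
    lintegral_union measurableSet_Ioi Ioc_disjoint_Ioi_same, mul_add,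
    ← setLIntegral_congr Ioo_ae_eq_Ioc, setLIntegral_congr_fun measurableSet_Ioo hlow,
    lintegral_const_mul _ (by fun_prop), setLIntegral_congr Ioo_ae_eq_Ioc, mul_left_comm,
    ofReal_mul_lintegral_Ioc_rpow_sub_one hY hr]
  simp_rw [Measure.restrict_apply' hI, inter_comm]

end LayerCake

section Young

variable {Z : Type*} [MeasurableSpace Z]

lemma ofReal_mul_mul_rpow_sub_one_le {p t : ℝ} (hp : 1 < p) (ht : 0 < t) (a b : ℝ≥0∞) :
    ENNReal.ofReal p * (a * b ^ (p - 1)) ≤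
      ENNReal.ofReal (t ^ (1 - p)) * a ^ p + ENNReal.ofReal ((p - 1) * t) * b ^ p := by
  have hp0 : 0 < p := by linarith
  have hp1 : 0 < p - 1 := by linarith
  set q := p / (p - 1) with hq_def
  have hq : 0 < q := by positivity
  -- Young's inequality for `(a * c) * (b ^ (p - 1) * d)`, where the weights satisfy `c * d = 1`
  set c := ENNReal.ofReal (t ^ ((1 - p) / p))
  set d := ENNReal.ofReal (t ^ ((p - 1) / p))
  have hcd : c * d = 1 := by
    rw [← ENNReal.ofReal_mul (by positivity), ← Real.rpow_add ht, ← add_div,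
      show 1 - p + (p - 1) = 0 by ring, zero_div, Real.rpow_zero, ENNReal.ofReal_one]
  have hc : c ^ p = ENNReal.ofReal (t ^ (1 - p)) := by
    rw [ENNReal.ofReal_rpow_of_nonneg (by positivity) hp0.le, ← Real.rpow_mul ht.le,
      div_mul_cancel₀ _ hp0.ne']
  have hd : d ^ q = ENNReal.ofReal t := by
    rw [ENNReal.ofReal_rpow_of_nonneg (by positivity) hq.le, ← Real.rpow_mul ht.le,
      show (p - 1) / p * q = 1 by rw [hq_def]; field_simp, Real.rpow_one]
  have hbq : (b ^ (p - 1)) ^ q = b ^ p := by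
    rw [← ENNReal.rpow_mul, show (p - 1) * q = p by rw [hq_def]; field_simp]
  have hpq : ENNReal.ofReal p * (ENNReal.ofReal q)⁻¹ = ENNReal.ofReal (p - 1) := by
    rw [← div_eq_mul_inv, ← ENNReal.ofReal_div_of_pos hq, hq_def, div_div_cancel₀ hp0.ne']
  calc ENNReal.ofReal p * (a * b ^ (p - 1))
      = ENNReal.ofReal p * ((a * c) * (b ^ (p - 1) * d)) := by
        rw [mul_mul_mul_comm, hcd, mul_one]
    _ ≤ ENNReal.ofReal p *
          ((a * c) ^ p / ENNReal.ofReal p + (b ^ (p - 1) * d) ^ q / ENNReal.ofReal q) := by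
        gcongr
        exact ENNReal.young_inequality _ _ (Real.HolderConjugate.conjExponent hp)
    _ = _ := by
        rw [ENNReal.mul_rpow_of_nonneg _ _ hp0.le, ENNReal.mul_rpow_of_nonneg _ _ hq.le, hc, hd,
          hbq, mul_add, ENNReal.mul_div_cancel (by simpa using hp0) ENNReal.ofReal_ne_top,
          div_eq_mul_inv, ENNReal.ofReal_mul hp1.le, ← hpq]
        ring

lemma ofReal_mul_lintegral_mul_rpow_sub_one_le (ν : Measure Z) {p t : ℝ} (hp : 1 < p)
    (ht : 0 < t) {f g : Z → ℝ≥0∞} (hf : Measurable f) :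
    ENNReal.ofReal p * ∫⁻ x, f x * g x ^ (p - 1) ∂ν ≤
      ENNReal.ofReal (t ^ (1 - p)) * ∫⁻ x, f x ^ p ∂ν +
        ENNReal.ofReal ((p - 1) * t) * ∫⁻ x, g x ^ p ∂ν := by
  rw [← lintegral_const_mul' _ _ ENNReal.ofReal_ne_top,
    ← lintegral_const_mul' _ _ ENNReal.ofReal_ne_top,
    ← lintegral_const_mul' _ _ ENNReal.ofReal_ne_top,
    ← lintegral_add_left ((hf.pow_const p).const_mul _)]
  exact lintegral_mono fun x => ofReal_mul_mul_rpow_sub_one_le hp ht (f x) (g x)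

end Young

section ReverseWeakTypeEstimates

variable {φ G : X → ℝ≥0∞} {I : Set X} {y : ℝ≥0∞} {p t : ℝ}

lemma sub_one_mul_setLIntegral_rpow_add_le (hI : MeasurableSet I) (hφ : Measurable φ)
    (hy : y ≠ ∞) (hφI : ∫⁻ x in I, φ x ∂μ = y * μ I) (hG : Measurable G)
    (hGt : ∀ x, G x ≠ ∞) (hyG : ∀ x ∈ I, y ≤ G x)
    (hweak : ReverseWeakTypeAbove μ φ G I y)
    (hp : 1 < p) :
    ENNReal.ofReal (p - 1) * ∫⁻ x in I, G x ^ p ∂μ + μ I * y ^ p ≤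
      ENNReal.ofReal p * ∫⁻ x in I, φ x * G x ^ (p - 1) ∂μ := by
  have hp1 : 0 < p - 1 := by linarith
  set ν := μ.withDensity φ
  set Y := y.toReal
  have hY : 0 ≤ Y := ENNReal.toReal_nonneg
  have hyY : ENNReal.ofReal Y = y := ENNReal.ofReal_toReal hy
  have hYG : ∀ x ∈ I, ENNReal.ofReal Y ≤ G x := hyY ▸ hyG
  set S : ℝ → Set X := fun t => I ∩ {x | ENNReal.ofReal t < G x}
  have hνI : ν I * y ^ (p - 1) = μ I * y ^ p := by
    have hpow : y * y ^ (p - 1) = y ^ p := by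
      nth_rewrite 1 [← ENNReal.rpow_one y]
      rw [← ENNReal.rpow_add_of_nonneg _ _ zero_le_one hp1.le, add_sub_cancel]
    rw [withDensity_apply φ hI, hφI, ← hpow]
    ring
  have hW : ∫⁻ t in Ioi Y, μ (S t) * ENNReal.ofReal (t ^ (p - 1)) ≤
      ∫⁻ t in Ioi Y, ν (S t) * ENNReal.ofReal (t ^ (p - 1 - 1)) := by
    refine setLIntegral_mono' measurableSet_Ioi fun t ht => ?_
    have ht0 : 0 < t := hY.trans_lt ht
    calc μ (S t) * ENNReal.ofReal (t ^ (p - 1))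
        = ENNReal.ofReal t * μ (S t) * ENNReal.ofReal (t ^ (p - 1 - 1)) := by
          rw [mul_comm (ENNReal.ofReal t), mul_assoc, ← ENNReal.ofReal_mul ht0.le,
            Real.rpow_sub_one ht0.ne' (p - 1), mul_div_cancel₀ _ ht0.ne']
      _ ≤ ν (S t) * ENNReal.ofReal (t ^ (p - 1 - 1)) := by
          gcongr
          rw [withDensity_apply φ (hI.inter (measurableSet_lt measurable_const hG))]
          exact hweak _ (hyY ▸ ENNReal.ofReal_le_ofReal ht.le)
  have hpsucc : ENNReal.ofReal (p - 1) + 1 = ENNReal.ofReal p := by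
    rw [← ENNReal.ofReal_one, ← ENNReal.ofReal_add hp1.le zero_le_one, sub_add_cancel]
  have hmul : ∫⁻ x in I, φ x * G x ^ (p - 1) ∂μ = ∫⁻ x in I, G x ^ (p - 1) ∂ν :=
    (setLIntegral_withDensity_eq_setLIntegral_mul μ hφ (hG.pow_const _) hI).symm
  rw [hmul,
    setLIntegral_rpow_eq_of_le μ hI hG hGt hY hYG (by linarith),
    setLIntegral_rpow_eq_of_le ν hI hG hGt hY hYG hp1, hyY, hνI]
  calc ENNReal.ofReal (p - 1) * (μ I * y ^ p + ENNReal.ofReal p *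
        ∫⁻ t in Ioi Y, μ (S t) * ENNReal.ofReal (t ^ (p - 1))) + μ I * y ^ p
      = ENNReal.ofReal p * (μ I * y ^ p + ENNReal.ofReal (p - 1) *
          ∫⁻ t in Ioi Y, μ (S t) * ENNReal.ofReal (t ^ (p - 1))) := by
        rw [← hpsucc]; ring
    _ ≤ _ := by gcongr

lemma setLIntegral_rpow_lower_bound_of_ne_top (hI : MeasurableSet I) (hφ : Measurable φ)
    (hy : y ≠ ∞) (hφI : ∫⁻ x in I, φ x ∂μ = y * μ I) (hG : Measurable G)
    (hGt : ∀ x, G x ≠ ∞) (hyG : ∀ x ∈ I, y ≤ G x)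
    (hweak : ReverseWeakTypeAbove μ φ G I y)
    (hGp : ∫⁻ x in I, G x ^ p ∂μ ≠ ∞) (hp : 1 < p) (ht0 : 0 < t) (ht1 : t < 1) :
    ENNReal.ofReal (t ^ (p - 1)) * (μ I * y ^ p) +
        ENNReal.ofReal ((p - 1) * t ^ (p - 1) * (1 - t)) * ∫⁻ x in I, G x ^ p ∂μ ≤
      ∫⁻ x in I, φ x ^ p ∂μ := by
  set V := μ I * y ^ p
  set A := ∫⁻ x in I, G x ^ p ∂μ
  set P := ∫⁻ x in I, φ x ^ p ∂μ
  have hp1 : 0 ≤ p - 1 := by linarith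
  have hsplit : ENNReal.ofReal (p - 1) * A =
      ENNReal.ofReal ((p - 1) * (1 - t)) * A + ENNReal.ofReal ((p - 1) * t) * A := by
    rw [← add_mul, ← ENNReal.ofReal_add (by nlinarith) (by positivity)]
    ring_nf
  have hcancel : ENNReal.ofReal ((p - 1) * (1 - t)) * A + V ≤ ENNReal.ofReal (t ^ (1 - p)) * P := by
    refine ENNReal.le_of_add_le_add_right
      (ENNReal.mul_ne_top ENNReal.ofReal_ne_top hGp : ENNReal.ofReal ((p - 1) * t) * A ≠ ∞) ?_
    calc ENNReal.ofReal ((p - 1) * (1 - t)) * A + V + ENNReal.ofReal ((p - 1) * t) * A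
        = ENNReal.ofReal (p - 1) * A + V := by rw [hsplit]; ring
      _ ≤ ENNReal.ofReal p * ∫⁻ x in I, φ x * G x ^ (p - 1) ∂μ :=
        sub_one_mul_setLIntegral_rpow_add_le hI hφ hy hφI hG hGt hyG hweak hp
      _ ≤ ENNReal.ofReal (t ^ (1 - p)) * P + ENNReal.ofReal ((p - 1) * t) * A :=
        ofReal_mul_lintegral_mul_rpow_sub_one_le _ hp ht0 hφ
  have hinv : ENNReal.ofReal (t ^ (p - 1)) * ENNReal.ofReal (t ^ (1 - p)) = 1 := by
    rw [← ENNReal.ofReal_mul (by positivity), ← Real.rpow_add ht0,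
      show p - 1 + (1 - p) = 0 by ring, Real.rpow_zero, ENNReal.ofReal_one]
  calc ENNReal.ofReal (t ^ (p - 1)) * V + ENNReal.ofReal ((p - 1) * t ^ (p - 1) * (1 - t)) * A
      = ENNReal.ofReal (t ^ (p - 1)) * (ENNReal.ofReal ((p - 1) * (1 - t)) * A + V) := by
        have hconst : ENNReal.ofReal ((p - 1) * t ^ (p - 1) * (1 - t)) =
            ENNReal.ofReal (t ^ (p - 1)) * ENNReal.ofReal ((p - 1) * (1 - t)) := by
          rw [← ENNReal.ofReal_mul (by positivity)]
          ring_nf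
        rw [hconst]
        ring
    _ ≤ ENNReal.ofReal (t ^ (p - 1)) * (ENNReal.ofReal (t ^ (1 - p)) * P) := by gcongr
    _ = P := by rw [← mul_assoc, hinv, one_mul]

lemma setLIntegral_rpow_lower_bound [IsFiniteMeasure μ] (hI : MeasurableSet I)
    (hφ : Measurable φ) (hy : y ≠ ∞) (hφI : ∫⁻ x in I, φ x ∂μ = y * μ I) (hG : Measurable G)
    (hyG : ∀ x ∈ I, y ≤ G x)
    (hweak : ReverseWeakTypeAbove μ φ G I y)
    (hp : 1 < p) (ht0 : 0 < t) (ht1 : t < 1) :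
    ENNReal.ofReal (t ^ (p - 1)) * (μ I * y ^ p) +
        ENNReal.ofReal ((p - 1) * t ^ (p - 1) * (1 - t)) * ∫⁻ x in I, G x ^ p ∂μ ≤
      ∫⁻ x in I, φ x ^ p ∂μ := by
  have hp0 : 0 < p := by linarith
  set N : ℕ → ℝ≥0∞ := fun n => y + n
  have hNt : ∀ n, N n ≠ ∞ := fun n => ENNReal.add_ne_top.mpr ⟨hy, ENNReal.natCast_ne_top n⟩
  have htrunc : ∀ n, ENNReal.ofReal (t ^ (p - 1)) * (μ I * y ^ p) +
      ENNReal.ofReal ((p - 1) * t ^ (p - 1) * (1 - t)) * ∫⁻ x in I, min (G x) (N n) ^ p ∂μ ≤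
      ∫⁻ x in I, φ x ^ p ∂μ := by
    intro n
    refine setLIntegral_rpow_lower_bound_of_ne_top hI hφ hy hφI (hG.min measurable_const)
      (fun x => ne_top_of_le_ne_top (hNt n) (min_le_right _ _))
      (fun x hx => le_min (hyG x hx) le_self_add) (hweak.min_const (N n)) ?_ hp ht0 ht1
    refine ne_top_of_le_ne_top (b := N n ^ p * μ I) ?_ ?_
    · exact ENNReal.mul_ne_top (ENNReal.rpow_ne_top_of_nonneg hp0.le (hNt n))
        (measure_ne_top μ I)
    · rw [← setLIntegral_const]
      exact lintegral_mono fun x => by gcongr; exact min_le_right _ _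
  have hsup : ∀ a : ℝ≥0∞, ⨆ n, min a (N n) ^ p = a ^ p := fun a => by
    have : ⨆ n, min a (N n) = a := by
      rw [← inf_iSup_eq, ← ENNReal.add_iSup, ENNReal.iSup_natCast, add_top, inf_top_eq]
    calc ⨆ n, min a (N n) ^ p = ENNReal.orderIsoRpow p hp0 (⨆ n, min a (N n)) :=
          ((ENNReal.orderIsoRpow p hp0).map_iSup _).symm
      _ = a ^ p := by rw [this]; rfl
  have hmono : Monotone fun n x => min (G x) (N n) ^ p := fun m n hmn x =>
    ENNReal.rpow_le_rpow (min_le_min_left _ (by simp only [N]; gcongr)) hp0.le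
  rw [← lintegral_congr fun x => hsup (G x),
    lintegral_iSup (fun n => (hG.min measurable_const).pow_const p) hmono,
    ENNReal.mul_iSup, ENNReal.add_iSup]
  exact iSup_le htrunc

end ReverseWeakTypeEstimates

lemma lower_bound_on_mem [IsFiniteMeasure μ] (T : DyadicTree μ) {φ : X → ℝ≥0∞}
    (hφ : Measurable φ) {I : Set X} (hI : I ∈ T.mem) (hIφ : ∫⁻ x in I, φ x ∂μ ≠ ∞)
    (hanc : ∀ J ∈ T.mem, I ⊆ J → Av μ J φ ≤ Av μ I φ) {p : ℝ} (hp : 1 < p) {β : ℝ}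
    (hβ : 0 < β) :
    μ I * Av μ I φ ^ p / ENNReal.ofReal ((β + 1) ^ (p - 1)) +
        ENNReal.ofReal ((p - 1) * β / (β + 1) ^ p) * ∫⁻ x in I, maxOp T φ x ^ p ∂μ ≤
      ∫⁻ x in I, φ x ^ p ∂μ := by
  have hβ1 : 0 < β + 1 := by linarith
  have hμ0 : μ I ≠ 0 := (T.measure_pos I hI).ne'
  set t := (β + 1)⁻¹
  have hfirst : μ I * Av μ I φ ^ p / ENNReal.ofReal ((β + 1) ^ (p - 1)) =
      ENNReal.ofReal (t ^ (p - 1)) * (μ I * Av μ I φ ^ p) := by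
    rw [div_eq_mul_inv, mul_comm, ← ENNReal.ofReal_inv_of_pos (by positivity),
      Real.inv_rpow hβ1.le]
  have hsecond : (p - 1) * β / (β + 1) ^ p = (p - 1) * t ^ (p - 1) * (1 - t) := by
    simp only [t]
    rw [Real.inv_rpow hβ1.le, Real.rpow_sub_one hβ1.ne' p]
    field_simp
    ring
  rw [hfirst, hsecond]
  exact setLIntegral_rpow_lower_bound (T.meas I hI) hφ (ENNReal.div_lt_top hIφ hμ0).ne
    (ENNReal.div_mul_cancel hμ0 (measure_ne_top μ I)).symm (measurable_maxOp T φ)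
    (fun x hx => av_le_maxOp T φ hI hx) (reverseWeakTypeAbove_maxOp T hI hanc) hp
    (by positivity) (inv_lt_one_of_one_lt₀ (by linarith))

theorem lower_bound_on_family_general (μ : Measure X) [IsProbabilityMeasure μ]
    (T : DyadicTree μ) (p : ℝ) (hp : 1 < p)
    (φ : X → ℝ≥0∞) (hφ : Measurable φ) (hint : ∫⁻ y, φ y ∂μ ≠ ∞)
    (A : Set (Set X)) (hA : A ⊆ Sphi T φ) (hdisj : A.Pairwise Disjoint)
    (β : ℝ) (hβ : 0 < β) :
    (∑' I : A, μ (I : Set X) * Av μ (I : Set X) φ ^ p) /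
        ENNReal.ofReal ((β + 1) ^ (p - 1)) +
      ENNReal.ofReal ((p - 1) * β / (β + 1) ^ p) *
        ∫⁻ x in ⋃₀ A, maxOp T φ x ^ p ∂μ ≤
      ∫⁻ x in ⋃₀ A, φ x ^ p ∂μ := by
  have hAmem : ∀ I ∈ A, I ∈ T.mem := fun I hI => mem_of_mem_Sphi T (hA hI)
  have hAc : A.Countable := T.countable_mem.mono hAmem
  have hAmeas : ∀ I ∈ A, MeasurableSet I := fun I hI => T.meas I (hAmem I hI)
  rw [setLIntegral_sUnion hAc hAmeas hdisj, setLIntegral_sUnion hAc hAmeas hdisj,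
    div_eq_mul_inv, ← ENNReal.tsum_mul_right, ← ENNReal.tsum_mul_left, ← ENNReal.tsum_add]
  refine ENNReal.tsum_le_tsum fun I => ?_
  rw [← div_eq_mul_inv]
  exact lower_bound_on_mem T hφ (hAmem I I.2)
    (ne_top_of_le_ne_top hint (setLIntegral_le_lintegral _ _))
    (fun J hJ hIJ => av_le_of_mem_Sphi T (hA I.2) hJ hIJ) hp hβ

/-- Theorem 3.2: let `φ` be `𝒯`-good and `𝒜 = {I_j}` a pairwise disjoint family of
elements of `S_φ`. Then for every `β > 0`:
`∫_{⋃ I_j} φ^p ≥ (Σ_j μ(I_j) Av_{I_j}(φ)^p)/(β+1)^(p−1)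
  + ((p−1)β/(β+1)^p) ∫_{⋃ I_j} (M_𝒯φ)^p`. -/
theorem lower_bound_on_family (μ : Measure X) [IsProbabilityMeasure μ]
    [NullSingletonClass μ] (T : DyadicTree μ) (p : ℝ) (hp : 1 < p)
    (φ : X → ℝ≥0∞) (hφ : Measurable φ) (hint : ∫⁻ y, φ y ∂μ ≠ ∞)
    (hgood : TGood T φ)
    (A : Set (Set X)) (hA : A ⊆ Sphi T φ) (hdisj : A.Pairwise Disjoint)
    (β : ℝ) (hβ : 0 < β) :
    (∑' I : A, μ (I : Set X) * Av μ (I : Set X) φ ^ p) /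
        ENNReal.ofReal ((β + 1) ^ (p - 1)) +
      ENNReal.ofReal ((p - 1) * β / (β + 1) ^ p) *
        ∫⁻ x in ⋃₀ A, maxOp T φ x ^ p ∂μ ≤
      ∫⁻ x in ⋃₀ A, φ x ^ p ∂μ :=
  lower_bound_on_family_general μ T p hp φ hφ hint A hA hdisj β hβ
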